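/- Let (C, Ω) be a category with V-face. Then the coend C(Ω), with its coalgebra structure and its E-bimodule structure coming from the coend in Bmd(E), is a V-dressed coalgebra. -/

import Mathlib

open TensorProduct


section Dressed

variable (K : Type) [Field K] (V : Type) [Fintype V] [DecidableEq V]

/-- An `E`-bimodule structure on a `K`-vector space, where `E = R̊ ⊗ R` is the
span of the orthogonal idempotents `λ̊μ` (indexed by `V × V`): commuting unital
left and right actions, encoded by the action operators of the idempotents. -/
structure EBim (C : Type) [AddCommGroup C] [Module K C] where
  /-- left action of the idempotent `λ̊μ` -/
  eL : V × V → C →ₗ[K] C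
  /-- right action of the idempotent `λ̊μ` -/
  eR : V × V → C →ₗ[K] C
  eL_orth : ∀ p q : V × V, eL p ∘ₗ eL q = if p = q then eL p else 0
  eR_orth : ∀ p q : V × V, eR p ∘ₗ eR q = if p = q then eR p else 0
  eLR_comm : ∀ p q : V × V, eL p ∘ₗ eR q = eR q ∘ₗ eL p
  sum_eL : ∑ p : V × V, eL p = LinearMap.id
  sum_eR : ∑ p : V × V, eR p = LinearMap.id

namespace EBim

variable {K V} {C : Type} [AddCommGroup C] [Module K C]

/-- left action of `λ̊` -/
def oL (B : EBim K V C) (l : V) : C →ₗ[K] C := ∑ m : V, B.eL (l, m)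

/-- left action of the "plain" element `μ` -/
def pL (B : EBim K V C) (m : V) : C →ₗ[K] C := ∑ l : V, B.eL (l, m)

/-- right action of `λ̊` -/
def oR (B : EBim K V C) (l : V) : C →ₗ[K] C := ∑ m : V, B.eR (l, m)

/-- right action of the "plain" element `μ` -/
def pR (B : EBim K V C) (m : V) : C →ₗ[K] C := ∑ l : V, B.eR (l, m)

end EBim

/-- A `V`-dressed coalgebra: a `K`-coalgebra with an `E`-bimodule structure
satisfying the compatibilities (9)–(11) of Hayashi's paper. -/
structure DressedStruct (C : Type) [AddCommGroup C] [Module K C]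
    extends EBim K V C where
  comul : C →ₗ[K] C ⊗[K] C
  counit : C →ₗ[K] K
  coassoc : ∀ c : C,
    (TensorProduct.assoc K C C C) ((TensorProduct.map comul LinearMap.id) (comul c)) =
      (TensorProduct.map LinearMap.id comul) (comul c)
  counit_comul : ∀ c : C,
    (TensorProduct.lid K C) ((TensorProduct.map counit LinearMap.id) (comul c)) = c
  comul_counit : ∀ c : C,
    (TensorProduct.rid K C) ((TensorProduct.map LinearMap.id counit) (comul c)) = c
  /-- `Δ(λ̊μ c λ̊'μ') = Σ λ̊ c₍₁₎ λ̊' ⊗ μ c₍₂₎ μ'` -/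
  comul_act : ∀ (p q : V × V) (c : C),
    comul (eL p (eR q c)) =
      (TensorProduct.map (toEBim.oL p.1 ∘ₗ toEBim.oR q.1)
        (toEBim.pL p.2 ∘ₗ toEBim.pR q.2)) (comul c)
  /-- `Σ λ c₍₁₎ μ ⊗ c₍₂₎ = Σ c₍₁₎ ⊗ λ̊ c₍₂₎ μ̊` -/
  exch : ∀ (l m : V) (c : C),
    (TensorProduct.map (toEBim.pL l ∘ₗ toEBim.pR m) LinearMap.id) (comul c) =
      (TensorProduct.map LinearMap.id (toEBim.oL l ∘ₗ toEBim.oR m)) (comul c)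
  /-- `ε(λ̊ c μ̊) = ε(λ c μ)` -/
  counit_act : ∀ (l m : V) (c : C),
    counit (toEBim.oL l (toEBim.oR m c)) = counit (toEBim.pL l (toEBim.pR m c))

/-- `f` is a map of `V`-dressed coalgebras (a coalgebra map which is also an
`E`-bimodule map). -/
def IsDrMap {C D : Type} [AddCommGroup C] [Module K C] [AddCommGroup D] [Module K D]
    (DC : DressedStruct K V C) (DD : DressedStruct K V D) (f : C →ₗ[K] D) : Prop :=
  (∀ c : C, DD.comul (f c) = (TensorProduct.map f f) (DC.comul c)) ∧
  (∀ c : C, DD.counit (f c) = DC.counit c) ∧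
  (∀ (p : V × V) (c : C), f (DC.eL p c) = DD.eL p (f c)) ∧
  (∀ (p : V × V) (c : C), f (DC.eR p c) = DD.eR p (f c))

/-- The subspace of `C ⊗[K] D` by which one divides to obtain the tensor
product `C ⊗_E D` of `E`-bimodules. -/
noncomputable def dbal {C D : Type} [AddCommGroup C] [Module K C]
    [AddCommGroup D] [Module K D] (A : EBim K V C) (B : EBim K V D) :
    Submodule K (C ⊗[K] D) :=
  Submodule.span K {z | ∃ (p : V × V) (c : C) (d : D),
    z = (A.eR p c) ⊗ₜ[K] d - c ⊗ₜ[K] (B.eL p d)}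

/-- The underlying vector space of `C ⊗_E D`. -/
noncomputable abbrev DTensor {C D : Type} [AddCommGroup C] [Module K C]
    [AddCommGroup D] [Module K D] (A : EBim K V C) (B : EBim K V D) : Type :=
  (C ⊗[K] D) ⧸ dbal K V A B

/-- The defining formulas for the `V`-dressed coalgebra structure on the tensor
product `C ⊗_E D` of two `V`-dressed coalgebras:
`Δ(c ⊗_E d) = Σ (c₍₁₎ ⊗_E d₍₁₎) ⊗ (c₍₂₎ ⊗_E d₍₂₎)`,
`ε(c ⊗_E d) = Σ_ν ε(cν) ε(νd)`, and the `E`-actions through the outer factors. -/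
def IsDTensorStruct {C D : Type} [AddCommGroup C] [Module K C]
    [AddCommGroup D] [Module K D] (DC : DressedStruct K V C) (DD : DressedStruct K V D)
    (DT : DressedStruct K V (DTensor K V DC.toEBim DD.toEBim)) : Prop :=
  (∀ (c : C) (d : D),
    DT.comul ((dbal K V DC.toEBim DD.toEBim).mkQ (c ⊗ₜ[K] d)) =
      (TensorProduct.map (dbal K V DC.toEBim DD.toEBim).mkQ
          (dbal K V DC.toEBim DD.toEBim).mkQ)
        ((TensorProduct.tensorTensorTensorComm K C C D D)
          (DC.comul c ⊗ₜ[K] DD.comul d))) ∧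
  (∀ (c : C) (d : D),
    DT.counit ((dbal K V DC.toEBim DD.toEBim).mkQ (c ⊗ₜ[K] d)) =
      ∑ n : V, DC.counit (DC.toEBim.pR n c) * DD.counit (DD.toEBim.pL n d)) ∧
  (∀ (p : V × V) (c : C) (d : D),
    DT.eL p ((dbal K V DC.toEBim DD.toEBim).mkQ (c ⊗ₜ[K] d)) =
      (dbal K V DC.toEBim DD.toEBim).mkQ ((DC.eL p c) ⊗ₜ[K] d)) ∧
  (∀ (p : V × V) (c : C) (d : D),
    DT.eR p ((dbal K V DC.toEBim DD.toEBim).mkQ (c ⊗ₜ[K] d)) =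
      (dbal K V DC.toEBim DD.toEBim).mkQ (c ⊗ₜ[K] (DD.eR p d)))

/-- The `V`-dressed coalgebra `E` itself: the defining formulas on the
canonical basis `{λ̊μ}` of `E = V × V → K`. -/
def IsEStruct (D : DressedStruct K V (V × V → K)) : Prop :=
  (∀ p : V × V, D.comul (Pi.single p 1) =
    ∑ n : V, (Pi.single (p.1, n) 1 : V × V → K) ⊗ₜ[K] (Pi.single (n, p.2) 1 : V × V → K)) ∧
  (∀ p : V × V, D.counit (Pi.single p 1) = if p.1 = p.2 then 1 else 0) ∧
  (∀ p q : V × V, D.eL p (Pi.single q 1) =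
    if p = q then (Pi.single q 1 : V × V → K) else 0) ∧
  (∀ p q : V × V, D.eR p (Pi.single q 1) =
    if p = q then (Pi.single q 1 : V × V → K) else 0)

end Dressed
section BmdR

open CategoryTheory

variable (K : Type) [Field K] (V : Type) [Fintype V] [DecidableEq V]

/-- A finite-dimensional `R`-bimodule, where `R = R_V` is the `K`-span of the
orthogonal idempotents `λ ∈ V`: a finite-dimensional `K`-vector space with
commuting unital left and right actions of `R`, encoded by the action
operators of the idempotents. -/
structure Bmd where
  M : Type
  [acg : AddCommGroup M]
  [mod : Module K M]
  [fd : FiniteDimensional K M]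
  /-- left action of `λ ∈ V` -/
  aL : V → M →ₗ[K] M
  /-- right action of `λ ∈ V` -/
  aR : V → M →ₗ[K] M
  aL_orth : ∀ l m : V, aL l ∘ₗ aL m = if l = m then aL l else 0
  aR_orth : ∀ l m : V, aR l ∘ₗ aR m = if l = m then aR l else 0
  aLR_comm : ∀ l m : V, aL l ∘ₗ aR m = aR m ∘ₗ aL l
  sum_aL : ∑ l : V, aL l = LinearMap.id
  sum_aR : ∑ l : V, aR l = LinearMap.id

attribute [instance] Bmd.acg Bmd.mod Bmd.fd

variable {K V}

/-- Maps of `R`-bimodules. -/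
def IsBmdMap (M N : Bmd K V) (f : M.M →ₗ[K] N.M) : Prop :=
  (∀ l : V, f ∘ₗ M.aL l = N.aL l ∘ₗ f) ∧ (∀ l : V, f ∘ₗ M.aR l = N.aR l ∘ₗ f)

variable (K V)

/-- The category `bmd(R)` of finite-dimensional `R`-bimodules. -/
noncomputable instance Bmd.category : Category (Bmd K V) where
  Hom M N := {f : M.M →ₗ[K] N.M // IsBmdMap M N f}
  id M := ⟨LinearMap.id, fun l => by simp, fun l => by simp⟩
  comp {M N P} f g := ⟨g.1 ∘ₗ f.1, by
    obtain ⟨fl, fr⟩ := f.2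
    obtain ⟨gl, gr⟩ := g.2
    constructor
    · intro l
      rw [LinearMap.comp_assoc, fl l, ← LinearMap.comp_assoc, gl l, LinearMap.comp_assoc]
    · intro l
      rw [LinearMap.comp_assoc, fr l, ← LinearMap.comp_assoc, gr l, LinearMap.comp_assoc]⟩
  id_comp f := Subtype.ext (LinearMap.comp_id f.1)
  comp_id f := Subtype.ext (LinearMap.id_comp f.1)
  assoc f g h := Subtype.ext (LinearMap.comp_assoc f.1 g.1 h.1).symm

variable {K V}

@[simp] lemma Bmd.id_coe (M : Bmd K V) : (𝟙 M : M ⟶ M).1 = LinearMap.id := rfl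

@[simp] lemma Bmd.comp_coe {M N P : Bmd K V} (f : M ⟶ N) (g : N ⟶ P) :
    (f ≫ g).1 = g.1 ∘ₗ f.1 := rfl

end BmdR

section Coend

open CategoryTheory

variable (K : Type) [Field K] (V : Type) [Fintype V] [DecidableEq V]
variable {C : Type} [SmallCategory C] (Ω : C ⥤ Bmd K V)

/-- The component `Ω(X)* ⊗ Ω(X)` of the functor whose coend is `C(Ω)`. -/
abbrev dMc (X : C) : Type := ((Ω.obj X).M →ₗ[K] K) ⊗[K] (Ω.obj X).M

/-- The free vector space on the pairs `(m*, m)` with `m* ∈ Ω(X)*`, `m ∈ Ω(X)`,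
`X ∈ ob C`. -/
abbrev PreCoend : Type :=
  (Σ X : C, ((Ω.obj X).M →ₗ[K] K) × (Ω.obj X).M) →₀ K

/-- The relations presenting the coend `C(Ω)` of `Ω* ⊗ Ω` as a quotient of the
free vector space `PreCoend`: bilinearity in `(m*, m)` and the coend
(dinaturality) relations `(f*(m*)) ⊗ m ∼ m* ⊗ f(m)`. -/
noncomputable def coendRel : Submodule K (PreCoend K V Ω) :=
  Submodule.span K
    ({z | ∃ (X : C) (g g' : (Ω.obj X).M →ₗ[K] K) (m : (Ω.obj X).M),
        z = Finsupp.single ⟨X, g + g', m⟩ (1 : K) -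
            Finsupp.single ⟨X, g, m⟩ 1 - Finsupp.single ⟨X, g', m⟩ 1} ∪
     {z | ∃ (X : C) (c : K) (g : (Ω.obj X).M →ₗ[K] K) (m : (Ω.obj X).M),
        z = Finsupp.single ⟨X, c • g, m⟩ (1 : K) -
            c • Finsupp.single ⟨X, g, m⟩ 1} ∪
     {z | ∃ (X : C) (g : (Ω.obj X).M →ₗ[K] K) (m m' : (Ω.obj X).M),
        z = Finsupp.single ⟨X, g, m + m'⟩ (1 : K) -
            Finsupp.single ⟨X, g, m⟩ 1 - Finsupp.single ⟨X, g, m'⟩ 1} ∪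
     {z | ∃ (X : C) (c : K) (g : (Ω.obj X).M →ₗ[K] K) (m : (Ω.obj X).M),
        z = Finsupp.single ⟨X, g, c • m⟩ (1 : K) -
            c • Finsupp.single ⟨X, g, m⟩ 1} ∪
     {z | ∃ (X Y : C) (f : X ⟶ Y) (g : (Ω.obj Y).M →ₗ[K] K) (m : (Ω.obj X).M),
        z = Finsupp.single ⟨X, g ∘ₗ (Ω.map f).1, m⟩ (1 : K) -
            Finsupp.single ⟨Y, g, (Ω.map f).1 m⟩ 1})

/-- The underlying vector space of the coend `C(Ω)` of `Ω* ⊗ Ω`. -/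
noncomputable abbrev CoendT : Type := PreCoend K V Ω ⧸ coendRel K V Ω

/-- The universal dinatural transformation
`κ_X : Ω(X)* ⊗ Ω(X) → C(Ω)`. -/
noncomputable def coendK (X : C) : dMc K V Ω X →ₗ[K] CoendT K V Ω :=
  TensorProduct.lift (LinearMap.mk₂ K
    (fun g m => (coendRel K V Ω).mkQ (Finsupp.single ⟨X, g, m⟩ (1 : K)))
    (fun g g' m => by
      beta_reduce
      rw [← map_add, Submodule.mkQ_apply, Submodule.mkQ_apply, Submodule.Quotient.eq]
      exact Submodule.subset_span (Or.inl (Or.inl (Or.inl (Or.inl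
        ⟨X, g, g', m, (sub_sub _ _ _).symm⟩)))))
    (fun c g m => by
      beta_reduce
      rw [← map_smul, Submodule.mkQ_apply, Submodule.mkQ_apply, Submodule.Quotient.eq]
      exact Submodule.subset_span (Or.inl (Or.inl (Or.inl (Or.inr ⟨X, c, g, m, rfl⟩)))))
    (fun g m m' => by
      beta_reduce
      rw [← map_add, Submodule.mkQ_apply, Submodule.mkQ_apply, Submodule.Quotient.eq]
      exact Submodule.subset_span (Or.inl (Or.inl (Or.inr
        ⟨X, g, m, m', (sub_sub _ _ _).symm⟩))))
    (fun c g m => by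
      beta_reduce
      rw [← map_smul, Submodule.mkQ_apply, Submodule.mkQ_apply, Submodule.Quotient.eq]
      exact Submodule.subset_span (Or.inl (Or.inr ⟨X, c, g, m, rfl⟩))))

/-- The coalgebra comultiplication on `C(Ω)` is determined by
`Δ(κ_X(m* ⊗ m)) = Σ_j κ_X(m* ⊗ m_j) ⊗ κ_X(m^j ⊗ m)` for any finite basis
`{m_j}` of `Ω(X)` with dual basis `{m^j}`. -/
def CoendComulSpec (comul : CoendT K V Ω →ₗ[K] CoendT K V Ω ⊗[K] CoendT K V Ω) : Prop :=
  ∀ (X : C) (ι : Type) (_ : Fintype ι) (b : Module.Basis ι K (Ω.obj X).M)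
    (g : (Ω.obj X).M →ₗ[K] K) (m : (Ω.obj X).M),
    comul (coendK K V Ω X (g ⊗ₜ[K] m)) =
      ∑ j : ι, (coendK K V Ω X (g ⊗ₜ[K] b j)) ⊗ₜ[K] (coendK K V Ω X (b.coord j ⊗ₜ[K] m))

/-- The counit of `C(Ω)` is determined by `ε(κ_X(m* ⊗ m)) = ⟨m*, m⟩`. -/
def CoendCounitSpec (counit : CoendT K V Ω →ₗ[K] K) : Prop :=
  ∀ (X : C) (g : (Ω.obj X).M →ₗ[K] K) (m : (Ω.obj X).M),
    counit (coendK K V Ω X (g ⊗ₜ[K] m)) = g m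

/-- The `E`-bimodule structure of `C(Ω)`, induced by
`λ̊μ (n ⊗ m) λ̊'μ' = λ̊ n λ̊' ⊗ μ m μ'` on `Ω(X)* ⊗ Ω(X)`. -/
def CoendBimSpec (B : EBim K V (CoendT K V Ω)) : Prop :=
  ∀ (p : V × V) (X : C) (g : (Ω.obj X).M →ₗ[K] K) (m : (Ω.obj X).M),
    B.eL p (coendK K V Ω X (g ⊗ₜ[K] m)) =
      coendK K V Ω X ((g ∘ₗ (Ω.obj X).aL p.1) ⊗ₜ[K] ((Ω.obj X).aL p.2 m)) ∧
    B.eR p (coendK K V Ω X (g ⊗ₜ[K] m)) =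
      coendK K V Ω X ((g ∘ₗ (Ω.obj X).aR p.1) ⊗ₜ[K] ((Ω.obj X).aR p.2 m))

/-- The full `V`-dressed coalgebra structure of the coend `C(Ω)`. -/
def CoendDressedSpec (D : DressedStruct K V (CoendT K V Ω)) : Prop :=
  CoendComulSpec K V Ω D.comul ∧ CoendCounitSpec K V Ω D.counit ∧
    CoendBimSpec K V Ω D.toEBim

/-- The right `C(Ω)`-comodule structure
`δ_X(m) = Σ_i m_i ⊗ κ_X(m^i ⊗ m)` on `Ω(X)`. -/
noncomputable def coendDelta (X : C) :
    (Ω.obj X).M →ₗ[K] (Ω.obj X).M ⊗[K] CoendT K V Ω :=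
  ∑ i, (TensorProduct.mk K (Ω.obj X).M (CoendT K V Ω)
      (Module.finBasis K (Ω.obj X).M i)) ∘ₗ coendK K V Ω X ∘ₗ
    (TensorProduct.mk K ((Ω.obj X).M →ₗ[K] K) (Ω.obj X).M
      ((Module.finBasis K (Ω.obj X).M).coord i))

end Coend
/-!
The coend `C(Ω)` is presented by the generators `κ_X(m* ⊗ m)` and the dinaturality relations, so
every structure map is defined on generators and checked to respect dinaturality. The
comultiplication `κ_X(m* ⊗ m) ↦ Σ_j κ_X(m* ⊗ m_j) ⊗ κ_X(m^j ⊗ m)` inserts the canonical element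
`Σ_j m_j ⊗ m^j` of `Ω(X) ⊗ Ω(X)*`; its independence of the basis and its dinaturality both come
from the fact that for a linear map `A : M → N` the tensor `Σ_j A m_j ⊗ m^j = Σ_i n_i ⊗ (n^i ∘ A)`
does not depend on the bases. The `E`-actions are induced by the `R`-actions on the `Ω(X)`, which
are natural in `X`, and each axiom of a dressed coalgebra reduces on generators to an identity
inside a single `Ω(X)* ⊗ Ω(X)`.
-/

section LinearAlgebra

variable {K : Type} [Field K] {M N W : Type} [AddCommGroup M] [Module K M]
  [AddCommGroup N] [Module K N] [AddCommGroup W] [Module K W]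

theorem Module.Basis.sum_map_tmul_coord {ι ι' : Type} [Fintype ι] [Fintype ι']
    (b : Module.Basis ι K M) (c : Module.Basis ι' K N) (A : M →ₗ[K] N) :
    ∑ j, A (b j) ⊗ₜ[K] b.coord j = ∑ i, c i ⊗ₜ[K] (c.coord i ∘ₗ A) := by
  calc ∑ j, A (b j) ⊗ₜ[K] b.coord j
      = ∑ j, ∑ i, c i ⊗ₜ[K] ((c.coord i ∘ₗ A) (b j) • b.coord j) := by
        refine Finset.sum_congr rfl fun j _ => ?_
        conv_lhs => rw [← c.sum_repr (A (b j))]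
        simp only [sum_tmul, smul_tmul, LinearMap.comp_apply, Module.Basis.coord_apply]
    _ = ∑ i, c i ⊗ₜ[K] (c.coord i ∘ₗ A) := by
        rw [Finset.sum_comm]
        simp only [← tmul_sum, Module.Basis.sum_dual_apply_smul_coord]

section Orthogonal

variable {V : Type} [DecidableEq V] {a : V → M →ₗ[K] M}

theorem apply_apply_of_orth (h : ∀ l m, a l ∘ₗ a m = if l = m then a l else 0) (l m : V)
    (x : M) :
    a l (a m x) = if l = m then a l x else 0 := by
  rw [← LinearMap.comp_apply, h]
  split_ifs <;> rfl

theorem comp_comp_of_orth (h : ∀ l m, a l ∘ₗ a m = if l = m then a l else 0) (l m : V)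
    (g : M →ₗ[K] W) :
    (g ∘ₗ a l) ∘ₗ a m = if l = m then g ∘ₗ a l else 0 := by
  rw [LinearMap.comp_assoc, h]
  split_ifs <;> simp

end Orthogonal

section Complete

variable {V : Type} [Fintype V] {a : V → M →ₗ[K] M}

theorem sum_apply_of_sum_eq_id (h : ∑ l, a l = LinearMap.id) (x : M) : ∑ l, a l x = x := by
  rw [← LinearMap.sum_apply, h, LinearMap.id_apply]

theorem sum_comp_of_sum_eq_id (h : ∑ l, a l = LinearMap.id) (g : M →ₗ[K] W) :
    ∑ l, g ∘ₗ a l = g := by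
  ext x
  rw [LinearMap.sum_apply]
  simp only [LinearMap.comp_apply, ← map_sum, sum_apply_of_sum_eq_id h]

end Complete

end LinearAlgebra

section CoendDressed

open CategoryTheory

variable (K : Type) [Field K] (V : Type) [Fintype V] [DecidableEq V]
variable {C : Type} [SmallCategory C] (Ω : C ⥤ Bmd K V)
variable {W : Type} [AddCommGroup W] [Module K W]

theorem coendK_tmul (X : C) (g : (Ω.obj X).M →ₗ[K] K) (m : (Ω.obj X).M) :
    coendK K V Ω X (g ⊗ₜ[K] m) = (coendRel K V Ω).mkQ (Finsupp.single ⟨X, g, m⟩ 1) := by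
  simp [coendK]

theorem coendK_tmul_comp_map {X Y : C} (f : X ⟶ Y) (g : (Ω.obj Y).M →ₗ[K] K)
    (m : (Ω.obj X).M) :
    coendK K V Ω X ((g ∘ₗ (Ω.map f).1) ⊗ₜ[K] m) = coendK K V Ω Y (g ⊗ₜ[K] (Ω.map f).1 m) := by
  rw [coendK_tmul, coendK_tmul, Submodule.mkQ_apply, Submodule.mkQ_apply, Submodule.Quotient.eq]
  exact Submodule.subset_span (Set.mem_union_right _ ⟨X, Y, f, g, m, rfl⟩)

theorem coendT_hom_ext {f g : CoendT K V Ω →ₗ[K] W}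
    (h : ∀ (X : C) (a : (Ω.obj X).M →ₗ[K] K) (m : (Ω.obj X).M),
      f (coendK K V Ω X (a ⊗ₜ[K] m)) = g (coendK K V Ω X (a ⊗ₜ[K] m))) : f = g := by
  refine Submodule.linearMap_qext _ (Finsupp.lhom_ext' fun ⟨X, a, m⟩ => LinearMap.ext_ring ?_)
  simpa only [LinearMap.comp_apply, Finsupp.lsingle_apply, ← Submodule.mkQ_apply,
    ← coendK_tmul] using h X a m

noncomputable def coendDesc (φ : ∀ X : C, dMc K V Ω X →ₗ[K] W)
    (hφ : ∀ ⦃X Y : C⦄ (f : X ⟶ Y) (g : (Ω.obj Y).M →ₗ[K] K) (m : (Ω.obj X).M),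
      φ X ((g ∘ₗ (Ω.map f).1) ⊗ₜ[K] m) = φ Y (g ⊗ₜ[K] (Ω.map f).1 m)) :
    CoendT K V Ω →ₗ[K] W :=
  (coendRel K V Ω).liftQ (Finsupp.linearCombination K fun s => φ s.1 (s.2.1 ⊗ₜ[K] s.2.2)) <| by
    rw [coendRel, Submodule.span_le]
    rintro z ((((⟨X, g, g', m, rfl⟩ | ⟨X, c, g, m, rfl⟩) | ⟨X, g, m, m', rfl⟩) |
      ⟨X, c, g, m, rfl⟩) | ⟨X, Y, f, g, m, rfl⟩) <;>
      simp [add_tmul, tmul_add, smul_tmul, tmul_smul, hφ]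

@[simp] theorem coendDesc_coendK (φ : ∀ X : C, dMc K V Ω X →ₗ[K] W) (hφ) (X : C)
    (g : (Ω.obj X).M →ₗ[K] K) (m : (Ω.obj X).M) :
    coendDesc K V Ω φ hφ (coendK K V Ω X (g ⊗ₜ[K] m)) = φ X (g ⊗ₜ[K] m) := by
  rw [coendK_tmul, coendDesc, Submodule.mkQ_apply, Submodule.liftQ_apply,
    Finsupp.linearCombination_single, one_smul]

noncomputable def coendMap (u v : ∀ X : C, Module.End K (Ω.obj X).M)
    (hu : ∀ ⦃X Y : C⦄ (f : X ⟶ Y), (Ω.map f).1 ∘ₗ u X = u Y ∘ₗ (Ω.map f).1)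
    (hv : ∀ ⦃X Y : C⦄ (f : X ⟶ Y), (Ω.map f).1 ∘ₗ v X = v Y ∘ₗ (Ω.map f).1) :
    Module.End K (CoendT K V Ω) :=
  coendDesc K V Ω (fun X => coendK K V Ω X ∘ₗ TensorProduct.map (u X).dualMap (v X))
    fun X Y f g m => by
      simp only [LinearMap.comp_apply, map_tmul, LinearMap.dualMap_apply', LinearMap.comp_assoc,
        hu f]
      rw [← LinearMap.comp_assoc, coendK_tmul_comp_map, ← LinearMap.comp_apply _ (v X), hv f,
        LinearMap.comp_apply]

@[simp] theorem coendMap_coendK (u v : ∀ X : C, Module.End K (Ω.obj X).M) (hu hv) (X : C)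
    (g : (Ω.obj X).M →ₗ[K] K) (m : (Ω.obj X).M) :
    coendMap K V Ω u v hu hv (coendK K V Ω X (g ⊗ₜ[K] m)) =
      coendK K V Ω X ((g ∘ₗ u X) ⊗ₜ[K] v X m) :=
  coendDesc_coendK K V Ω _ _ X g m

noncomputable def coendBim : EBim K V (CoendT K V Ω) where
  eL p := coendMap K V Ω (fun X => (Ω.obj X).aL p.1) (fun X => (Ω.obj X).aL p.2)
    (fun _ _ f => (Ω.map f).2.1 p.1) (fun _ _ f => (Ω.map f).2.1 p.2)
  eR p := coendMap K V Ω (fun X => (Ω.obj X).aR p.1) (fun X => (Ω.obj X).aR p.2)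
    (fun _ _ f => (Ω.map f).2.2 p.1) (fun _ _ f => (Ω.map f).2.2 p.2)
  eL_orth p q := coendT_hom_ext K V Ω fun X g m => by
    have horth := (Ω.obj X).aL_orth
    simp only [LinearMap.comp_apply, coendMap_coendK, apply_apply_of_orth horth,
      comp_comp_of_orth horth]
    split_ifs <;> simp_all [Prod.ext_iff]
  eR_orth p q := coendT_hom_ext K V Ω fun X g m => by
    have horth := (Ω.obj X).aR_orth
    simp only [LinearMap.comp_apply, coendMap_coendK, apply_apply_of_orth horth,
      comp_comp_of_orth horth]
    split_ifs <;> simp_all [Prod.ext_iff]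
  eLR_comm p q := coendT_hom_ext K V Ω fun X g m => by
    have hm := LinearMap.congr_fun ((Ω.obj X).aLR_comm p.2 q.2) m
    simp only [LinearMap.comp_apply] at hm
    simp only [LinearMap.comp_apply, coendMap_coendK, LinearMap.comp_assoc,
      (Ω.obj X).aLR_comm, hm]
  sum_eL := coendT_hom_ext K V Ω fun X g m => by
    simp only [LinearMap.sum_apply, coendMap_coendK, Fintype.sum_prod_type, ← map_sum,
      ← tmul_sum, ← sum_tmul, sum_apply_of_sum_eq_id (Ω.obj X).sum_aL,
      sum_comp_of_sum_eq_id (Ω.obj X).sum_aL, LinearMap.id_apply]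
  sum_eR := coendT_hom_ext K V Ω fun X g m => by
    simp only [LinearMap.sum_apply, coendMap_coendK, Fintype.sum_prod_type, ← map_sum,
      ← tmul_sum, ← sum_tmul, sum_apply_of_sum_eq_id (Ω.obj X).sum_aR,
      sum_comp_of_sum_eq_id (Ω.obj X).sum_aR, LinearMap.id_apply]

@[simp] theorem coendBim_eL_coendK (p : V × V) (X : C) (g : (Ω.obj X).M →ₗ[K] K)
    (m : (Ω.obj X).M) :
    (coendBim K V Ω).eL p (coendK K V Ω X (g ⊗ₜ[K] m)) =
      coendK K V Ω X ((g ∘ₗ (Ω.obj X).aL p.1) ⊗ₜ[K] (Ω.obj X).aL p.2 m) := by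
  simp only [coendBim, coendMap_coendK]

@[simp] theorem coendBim_eR_coendK (p : V × V) (X : C) (g : (Ω.obj X).M →ₗ[K] K)
    (m : (Ω.obj X).M) :
    (coendBim K V Ω).eR p (coendK K V Ω X (g ⊗ₜ[K] m)) =
      coendK K V Ω X ((g ∘ₗ (Ω.obj X).aR p.1) ⊗ₜ[K] (Ω.obj X).aR p.2 m) := by
  simp only [coendBim, coendMap_coendK]

@[simp] theorem coendBim_oL_coendK (l : V) (X : C) (g : (Ω.obj X).M →ₗ[K] K)
    (m : (Ω.obj X).M) :
    (coendBim K V Ω).oL l (coendK K V Ω X (g ⊗ₜ[K] m)) =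
      coendK K V Ω X ((g ∘ₗ (Ω.obj X).aL l) ⊗ₜ[K] m) := by
  simp only [EBim.oL, LinearMap.sum_apply, coendBim_eL_coendK, ← map_sum, ← tmul_sum,
    sum_apply_of_sum_eq_id (Ω.obj X).sum_aL]

@[simp] theorem coendBim_pL_coendK (l : V) (X : C) (g : (Ω.obj X).M →ₗ[K] K)
    (m : (Ω.obj X).M) :
    (coendBim K V Ω).pL l (coendK K V Ω X (g ⊗ₜ[K] m)) =
      coendK K V Ω X (g ⊗ₜ[K] (Ω.obj X).aL l m) := by
  simp only [EBim.pL, LinearMap.sum_apply, coendBim_eL_coendK, ← map_sum, ← sum_tmul,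
    sum_comp_of_sum_eq_id (Ω.obj X).sum_aL]

@[simp] theorem coendBim_oR_coendK (l : V) (X : C) (g : (Ω.obj X).M →ₗ[K] K)
    (m : (Ω.obj X).M) :
    (coendBim K V Ω).oR l (coendK K V Ω X (g ⊗ₜ[K] m)) =
      coendK K V Ω X ((g ∘ₗ (Ω.obj X).aR l) ⊗ₜ[K] m) := by
  simp only [EBim.oR, LinearMap.sum_apply, coendBim_eR_coendK, ← map_sum, ← tmul_sum,
    sum_apply_of_sum_eq_id (Ω.obj X).sum_aR]

@[simp] theorem coendBim_pR_coendK (l : V) (X : C) (g : (Ω.obj X).M →ₗ[K] K)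
    (m : (Ω.obj X).M) :
    (coendBim K V Ω).pR l (coendK K V Ω X (g ⊗ₜ[K] m)) =
      coendK K V Ω X (g ⊗ₜ[K] (Ω.obj X).aR l m) := by
  simp only [EBim.pR, LinearMap.sum_apply, coendBim_eR_coendK, ← map_sum, ← sum_tmul,
    sum_comp_of_sum_eq_id (Ω.obj X).sum_aR]

theorem sum_coendK_tmul_map_basis {X Y : C} (A : (Ω.obj X).M →ₗ[K] (Ω.obj Y).M)
    {ι ι' : Type} [Fintype ι] [Fintype ι']
    (b : Module.Basis ι K (Ω.obj X).M) (c : Module.Basis ι' K (Ω.obj Y).M)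
    (g : (Ω.obj Y).M →ₗ[K] K) (m : (Ω.obj X).M) :
    ∑ j, coendK K V Ω Y (g ⊗ₜ[K] A (b j)) ⊗ₜ[K] coendK K V Ω X (b.coord j ⊗ₜ[K] m) =
      ∑ i, coendK K V Ω Y (g ⊗ₜ[K] c i) ⊗ₜ[K] coendK K V Ω X ((c.coord i ∘ₗ A) ⊗ₜ[K] m) := by
  simpa only [map_sum, map_tmul, LinearMap.comp_apply, TensorProduct.mk_apply,
    LinearMap.flip_apply] using
    congrArg (TensorProduct.map (coendK K V Ω Y ∘ₗ TensorProduct.mk K _ _ g)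
      (coendK K V Ω X ∘ₗ (TensorProduct.mk K _ _).flip m)) (b.sum_map_tmul_coord c A)

noncomputable def coendComulAt (X : C) {ι : Type} [Fintype ι]
    (b : Module.Basis ι K (Ω.obj X).M) :
    dMc K V Ω X →ₗ[K] CoendT K V Ω ⊗[K] CoendT K V Ω :=
  ∑ j, TensorProduct.map (coendK K V Ω X ∘ₗ (TensorProduct.mk K _ _).flip (b j))
    (coendK K V Ω X ∘ₗ TensorProduct.mk K _ _ (b.coord j))

theorem coendComulAt_tmul (X : C) {ι : Type} [Fintype ι] (b : Module.Basis ι K (Ω.obj X).M)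
    (g : (Ω.obj X).M →ₗ[K] K) (m : (Ω.obj X).M) :
    coendComulAt K V Ω X b (g ⊗ₜ[K] m) =
      ∑ j, coendK K V Ω X (g ⊗ₜ[K] b j) ⊗ₜ[K] coendK K V Ω X (b.coord j ⊗ₜ[K] m) := by
  simp [coendComulAt]

noncomputable def coendComul : CoendT K V Ω →ₗ[K] CoendT K V Ω ⊗[K] CoendT K V Ω :=
  coendDesc K V Ω (fun X => coendComulAt K V Ω X (Module.finBasis K (Ω.obj X).M))
    fun X Y f g m => by
      simp only [coendComulAt_tmul, coendK_tmul_comp_map]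
      rw [sum_coendK_tmul_map_basis K V Ω _ _ (Module.finBasis K (Ω.obj Y).M)]
      simp only [coendK_tmul_comp_map]

theorem coendComul_coendK (X : C) {ι : Type} [Fintype ι] (b : Module.Basis ι K (Ω.obj X).M)
    (g : (Ω.obj X).M →ₗ[K] K) (m : (Ω.obj X).M) :
    coendComul K V Ω (coendK K V Ω X (g ⊗ₜ[K] m)) =
      ∑ j, coendK K V Ω X (g ⊗ₜ[K] b j) ⊗ₜ[K] coendK K V Ω X (b.coord j ⊗ₜ[K] m) := by
  rw [coendComul, coendDesc_coendK, coendComulAt_tmul]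
  simpa only [LinearMap.id_apply, LinearMap.comp_id] using
    sum_coendK_tmul_map_basis K V Ω LinearMap.id (Module.finBasis K (Ω.obj X).M) b g m

noncomputable def coendCounit : CoendT K V Ω →ₗ[K] K :=
  coendDesc K V Ω (fun X => contractLeft K (Ω.obj X).M) fun X Y f g m => by
    simp only [contractLeft_apply, LinearMap.comp_apply]

@[simp] theorem coendCounit_coendK (X : C) (g : (Ω.obj X).M →ₗ[K] K) (m : (Ω.obj X).M) :
    coendCounit K V Ω (coendK K V Ω X (g ⊗ₜ[K] m)) = g m :=
  (coendDesc_coendK K V Ω _ _ X g m).trans (contractLeft_apply g m)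

local notation "Δ" => coendComul K V Ω
local notation "ε" => coendCounit K V Ω

theorem coendComul_coassoc :
    (TensorProduct.assoc K _ _ _).toLinearMap ∘ₗ LinearMap.rTensor _ Δ ∘ₗ Δ =
      LinearMap.lTensor _ Δ ∘ₗ Δ := by
  refine coendT_hom_ext K V Ω fun X g m => ?_
  let b := Module.finBasis K (Ω.obj X).M
  simp only [LinearMap.comp_apply, LinearEquiv.coe_coe, coendComul_coendK K V Ω X b, map_sum,
    LinearMap.rTensor_tmul, LinearMap.lTensor_tmul, sum_tmul, tmul_sum, assoc_tmul]
  exact Finset.sum_comm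

theorem rTensor_coendCounit_comp_coendComul :
    (TensorProduct.lid K _).toLinearMap ∘ₗ LinearMap.rTensor _ ε ∘ₗ Δ = LinearMap.id := by
  refine coendT_hom_ext K V Ω fun X g m => ?_
  let b := Module.finBasis K (Ω.obj X).M
  simp only [LinearMap.comp_apply, LinearEquiv.coe_coe, coendComul_coendK K V Ω X b, map_sum,
    LinearMap.rTensor_tmul, LinearMap.id_apply, coendCounit_coendK, lid_tmul, ← map_smul,
    smul_tmul']
  rw [← map_sum, ← sum_tmul, b.sum_dual_apply_smul_coord]

theorem lTensor_coendCounit_comp_coendComul :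
    (TensorProduct.rid K _).toLinearMap ∘ₗ LinearMap.lTensor _ ε ∘ₗ Δ = LinearMap.id := by
  refine coendT_hom_ext K V Ω fun X g m => ?_
  let b := Module.finBasis K (Ω.obj X).M
  simp only [LinearMap.comp_apply, LinearEquiv.coe_coe, coendComul_coendK K V Ω X b, map_sum,
    LinearMap.lTensor_tmul, LinearMap.id_apply, coendCounit_coendK, rid_tmul, ← map_smul,
    ← tmul_smul, Module.Basis.coord_apply]
  rw [← map_sum, ← tmul_sum, b.sum_repr]

theorem coendComul_comp_eL_comp_eR (p q : V × V) :
    Δ ∘ₗ (coendBim K V Ω).eL p ∘ₗ (coendBim K V Ω).eR q =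
      TensorProduct.map ((coendBim K V Ω).oL p.1 ∘ₗ (coendBim K V Ω).oR q.1)
        ((coendBim K V Ω).pL p.2 ∘ₗ (coendBim K V Ω).pR q.2) ∘ₗ Δ := by
  refine coendT_hom_ext K V Ω fun X g m => ?_
  let b := Module.finBasis K (Ω.obj X).M
  simp [coendComul_coendK K V Ω X b]

theorem coendComul_exchange (l m : V) :
    TensorProduct.map ((coendBim K V Ω).pL l ∘ₗ (coendBim K V Ω).pR m) LinearMap.id ∘ₗ Δ =
      TensorProduct.map LinearMap.id ((coendBim K V Ω).oL l ∘ₗ (coendBim K V Ω).oR m) ∘ₗ Δ := by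
  refine coendT_hom_ext K V Ω fun X g x => ?_
  let b := Module.finBasis K (Ω.obj X).M
  have hA := sum_coendK_tmul_map_basis K V Ω ((Ω.obj X).aL l ∘ₗ (Ω.obj X).aR m) b b g x
  simp only [LinearMap.comp_apply] at hA
  simp [coendComul_coendK K V Ω X b, hA, LinearMap.comp_assoc, (Ω.obj X).aLR_comm]

theorem coendCounit_comp_oL_comp_oR (l m : V) :
    ε ∘ₗ (coendBim K V Ω).oL l ∘ₗ (coendBim K V Ω).oR m =
      ε ∘ₗ (coendBim K V Ω).pL l ∘ₗ (coendBim K V Ω).pR m := by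
  refine coendT_hom_ext K V Ω fun X g x => ?_
  simpa using congrArg g (LinearMap.congr_fun ((Ω.obj X).aLR_comm l m) x).symm

noncomputable def coendDressed : DressedStruct K V (CoendT K V Ω) where
  toEBim := coendBim K V Ω
  comul := Δ
  counit := ε
  coassoc := LinearMap.congr_fun (coendComul_coassoc K V Ω)
  counit_comul := LinearMap.congr_fun (rTensor_coendCounit_comp_coendComul K V Ω)
  comul_counit := LinearMap.congr_fun (lTensor_coendCounit_comp_coendComul K V Ω)
  comul_act p q := LinearMap.congr_fun (coendComul_comp_eL_comp_eR K V Ω p q)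
  exch l m := LinearMap.congr_fun (coendComul_exchange K V Ω l m)
  counit_act l m := LinearMap.congr_fun (coendCounit_comp_oL_comp_oR K V Ω l m)

end CoendDressed

section Stmt11

open CategoryTheory

variable (K : Type) [Field K] (V : Type) [Fintype V] [DecidableEq V]
variable {C : Type} [SmallCategory C] (Ω : C ⥤ Bmd K V)

/-- STATEMENT 11: for a category with `V`-face `(C, Ω)`, the coend `C(Ω)`,
with its coalgebra structure and the `E`-bimodule structure coming from the
coend in `Bmd(E)`, is a `V`-dressed coalgebra. -/
theorem coend_dressed :
    ∃ D : DressedStruct K V (CoendT K V Ω), CoendDressedSpec K V Ω D :=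
  ⟨coendDressed K V Ω, fun X _ _ b g m => coendComul_coendK K V Ω X b g m,
    coendCounit_coendK K V Ω,
    fun p X g m => ⟨coendBim_eL_coendK K V Ω p X g m, coendBim_eR_coendK K V Ω p X g m⟩⟩

end Stmt11
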